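/- Let T be a complete satisfiable L-theory that is fully VC-minimal. Then T has low VC-density: for every partitioned L-formula φ(x̄; ȳ) there exists K < ω such that for every model M ⊨ T and every finite nonempty B ⊆ M^{lg(ȳ)}, the number of distinct functions from B to {true, false} of the form b̄ ↦ (M ⊨ φ(ā; b̄)) for ā ∈ M^{lg(x̄)} is at most K·|B|^{lg(x̄)}. -/

import Mathlib

open FirstOrder Language

universe w

/-- `φ(M; b̄)`, the set defined in `M` by the partitioned formula `φ(x; ȳ)` with
parameters `b̄`. -/
def realizeSet (L : Language) (M : Type*) [L.Structure M] {m : ℕ}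
    (φ : L.Formula (Unit ⊕ Fin m)) (b : Fin m → M) : Set M :=
  {a : M | φ.Realize (Sum.elim (fun _ => a) b)}

/-- A family of subsets of `X` has independence dimension `≤ 1` with respect to `X`. -/
def IndepDimLEOne {X : Type*} (𝒜 : Set (Set X)) : Prop :=
  ∀ A ∈ 𝒜, ∀ B ∈ 𝒜, A ∩ B = ∅ ∨ A \ B = ∅ ∨ B \ A = ∅ ∨ (A ∪ B)ᶜ = ∅

/-- Boolean combinations (in the free variables `(x; ȳ)` with `lg ȳ = m`) of formulas
from `Ψ`, where each formula `ψ(x; z̄) ∈ Ψ` may be instantiated by substituting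
variables from `ȳ` for `z̄`. -/
inductive BoolCombOf {L : Language} (Ψ : Set ((k : ℕ) × L.Formula (Unit ⊕ Fin k)))
    (m : ℕ) : L.Formula (Unit ⊕ Fin m) → Prop
  | of (p : (k : ℕ) × L.Formula (Unit ⊕ Fin k)) (hp : p ∈ Ψ) (ρ : Fin p.1 → Fin m) :
      BoolCombOf Ψ m (p.2.relabel (Sum.map id ρ))
  | not {θ : L.Formula (Unit ⊕ Fin m)} : BoolCombOf Ψ m θ → BoolCombOf Ψ m θ.not
  | and {θ₁ θ₂ : L.Formula (Unit ⊕ Fin m)} :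
      BoolCombOf Ψ m θ₁ → BoolCombOf Ψ m θ₂ → BoolCombOf Ψ m (θ₁ ⊓ θ₂)
  | or {θ₁ θ₂ : L.Formula (Unit ⊕ Fin m)} :
      BoolCombOf Ψ m θ₁ → BoolCombOf Ψ m θ₂ → BoolCombOf Ψ m (θ₁ ⊔ θ₂)

/-- `T` is fully VC-minimal: there is a set `Ψ` of partitioned formulas `ψ(x; z̄)`
(`x` a single variable) whose instances have independence dimension `≤ 1` in every
model of `T`, and such that every partitioned formula `φ(x; ȳ)` is `T`-equivalent to
a Boolean combination of formulas from `Ψ` in the free variables `(x; ȳ)`. -/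
def FullyVCMinimal (L : Language) (T : L.Theory) : Prop :=
  ∃ Ψ : Set ((k : ℕ) × L.Formula (Unit ⊕ Fin k)),
    (∀ (M : Type w) [Nonempty M] [L.Structure M], M ⊨ T →
      IndepDimLEOne {S : Set M | ∃ p ∈ Ψ, ∃ b : Fin p.1 → M, S = realizeSet L M p.2 b}) ∧
    ∀ (m : ℕ) (φ : L.Formula (Unit ⊕ Fin m)),
      ∃ θ : L.Formula (Unit ⊕ Fin m), BoolCombOf Ψ m θ ∧
        ∀ (M : Type w) [Nonempty M] [L.Structure M], M ⊨ T →
          ∀ v : Unit ⊕ Fin m → M, φ.Realize v ↔ θ.Realize v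

/-!
Induct on the number of object variables, for a finite family of formulas at once, and write a
tuple as `(x, a')`. By full VC-minimality each formula is determined, uniformly in the models of
`T`, by the membership of `x` in finitely many sets `A = ψ(M; a', b)` with `ψ ∈ Ψ`. Fix a point
`s` and replace each `A` by whichever of `A`, `Aᶜ` omits `s`. Two members of a family of
independence dimension `≤ 1` that share a point and omit a common point are nested, so the
modified sets containing `x` form a chain. The trace of `x` is therefore determined by the least
set of that chain (one of `|J|·|B| + 1` codes) together with the truth values at `a'` of the
formulas "`A₀ ⊆ A`" and "`s ∈ A`" with parameters `(b, b₀, s)`. These formulas have one object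
variable fewer, so induction bounds their traces by `K·|B|^n`, and the total count by
`(|J| + 1)·K·|B|^(n+1)`.
-/

open Set

lemma Function.FactorsThrough.ncard_range_le {A X Y : Type*} {F : A → X} {G : A → Y}
    (hG : G.FactorsThrough F) (hF : (range F).Finite) : (range G).ncard ≤ (range F).ncard := by
  rcases isEmpty_or_nonempty A with hA | ⟨⟨a₀⟩⟩
  · simp [range_eq_empty]
  · rw [← hG.extend_comp (fun _ => G a₀), range_comp]
    exact ncard_image_le hF

lemma ncard_setOf_snd_mem_le_sum {C Y : Type*} [Fintype C] (S : C → Set Y) :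
    {p : C × Y | p.2 ∈ S p.1}.ncard ≤ ∑ c, (S c).ncard := by
  have hunion : {p : C × Y | p.2 ∈ S p.1} = ⋃ c, Prod.mk c '' S c := by
    ext ⟨c, y⟩
    simp
  rw [hunion]
  refine (ncard_iUnion_le_of_fintype _).trans (Finset.sum_le_sum fun c _ => ?_)
  exact (ncard_image_of_injective _ (Prod.mk_right_injective c)).le

section IndepDim

variable {X : Type*}

def IsIndependentPair (A B : Set X) : Prop :=
  (A ∩ B).Nonempty ∧ (A \ B).Nonempty ∧ (B \ A).Nonempty ∧ (A ∪ B)ᶜ.Nonempty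

lemma indepDimLEOne_iff {𝒜 : Set (Set X)} :
    IndepDimLEOne 𝒜 ↔ ∀ A ∈ 𝒜, ∀ B ∈ 𝒜, ¬IsIndependentPair A B := by
  simp only [IndepDimLEOne, IsIndependentPair, ← not_nonempty_iff_eq_empty, not_and_or]

lemma IsIndependentPair.symm {A B : Set X} (h : IsIndependentPair A B) :
    IsIndependentPair B A := by
  obtain ⟨h₁, h₂, h₃, h₄⟩ := h
  exact ⟨inter_comm A B ▸ h₁, h₃, h₂, union_comm A B ▸ h₄⟩

lemma isIndependentPair_compl_left {A B : Set X} :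
    IsIndependentPair Aᶜ B ↔ IsIndependentPair A B := by
  have h₁ : Aᶜ ∩ B = B \ A := by ext; simp [and_comm]
  have h₂ : Aᶜ \ B = (A ∪ B)ᶜ := by ext; simp
  have h₃ : B \ Aᶜ = A ∩ B := by ext; simp [and_comm]
  have h₄ : (Aᶜ ∪ B)ᶜ = A \ B := by ext; simp
  simp only [IsIndependentPair, h₁, h₂, h₃, h₄]
  tauto

lemma isIndependentPair_compl_right {A B : Set X} :
    IsIndependentPair A Bᶜ ↔ IsIndependentPair A B :=
  ⟨fun h => (isIndependentPair_compl_left.1 h.symm).symm,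
    fun h => (isIndependentPair_compl_left.2 h.symm).symm⟩

lemma IndepDimLEOne.mono {𝒜 ℬ : Set (Set X)} (h : IndepDimLEOne ℬ) (h𝒜 : 𝒜 ⊆ ℬ) :
    IndepDimLEOne 𝒜 :=
  fun A hA B hB => h A (h𝒜 hA) B (h𝒜 hB)

lemma IndepDimLEOne.union_image_compl {𝒜 : Set (Set X)} (h : IndepDimLEOne 𝒜) :
    IndepDimLEOne (𝒜 ∪ compl '' 𝒜) := by
  rw [indepDimLEOne_iff] at h ⊢
  rintro A (hA | ⟨A, hA, rfl⟩) B (hB | ⟨B, hB, rfl⟩)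
  · exact h A hA B hB
  · rw [isIndependentPair_compl_right]; exact h A hA B hB
  · rw [isIndependentPair_compl_left]; exact h A hA B hB
  · rw [isIndependentPair_compl_left, isIndependentPair_compl_right]; exact h A hA B hB

lemma IndepDimLEOne.subset_or_subset {𝒜 : Set (Set X)} (h : IndepDimLEOne 𝒜) {A B : Set X}
    (hA : A ∈ 𝒜) (hB : B ∈ 𝒜) {x s : X} (hx : x ∈ A ∩ B) (hs : s ∉ A ∪ B) :
    A ⊆ B ∨ B ⊆ A := by
  rcases h A hA B hB with h | h | h | h
  · exact absurd hx (h ▸ notMem_empty x)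
  · exact Or.inl (sdiff_eq_empty.1 h)
  · exact Or.inr (sdiff_eq_empty.1 h)
  · exact absurd (h ▸ mem_compl hs) (notMem_empty s)

def complIfMem (A : Set X) (s : X) : Set X := {x | x ∈ A ↔ s ∉ A}

lemma mem_complIfMem {A : Set X} {s x : X} : x ∈ complIfMem A s ↔ (x ∈ A ↔ s ∉ A) := Iff.rfl

lemma notMem_complIfMem_self (A : Set X) (s : X) : s ∉ complIfMem A s := by
  simp [mem_complIfMem]

lemma complIfMem_mem_union_image_compl {𝒜 : Set (Set X)} {A : Set X} (hA : A ∈ 𝒜) (s : X) :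
    complIfMem A s ∈ 𝒜 ∪ compl '' 𝒜 := by
  by_cases hs : s ∈ A
  · refine Or.inr ⟨A, hA, ?_⟩
    ext x
    simp [mem_complIfMem, hs]
  · refine Or.inl ?_
    convert hA using 1
    ext x
    simp [mem_complIfMem, hs]

lemma exists_option_mem_iff_subset {I : Type*} [Finite I] {A : I → Set X} {x : X}
    (hchain : ∀ i j, x ∈ A i → x ∈ A j → A i ⊆ A j ∨ A j ⊆ A i) :
    ∃ c : Option I, ∀ i, x ∈ A i ↔ ∃ i₀ ∈ c, A i₀ ⊆ A i := by
  by_cases hx : ∃ i, x ∈ A i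
  · obtain ⟨i₀, hi₀, hmin⟩ :=
      (toFinite {i | x ∈ A i}).exists_minimalFor A _ hx
    refine ⟨some i₀, fun i => ⟨fun hi => ⟨i₀, rfl, ?_⟩, ?_⟩⟩
    · exact (hchain i₀ i hi₀ hi).elim id fun h => hmin hi h
    · rintro ⟨j, hj, h⟩
      obtain rfl := Option.mem_some_iff.1 hj
      exact h hi₀
  · push Not at hx
    exact ⟨none, fun i => by simp [hx i]⟩

lemma IndepDimLEOne.exists_option_mem_iff {𝒜 : Set (Set X)} (h : IndepDimLEOne 𝒜)
    {I : Type*} [Finite I] {A : I → Set X} (hA : ∀ i, A i ∈ 𝒜) (s x : X) :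
    ∃ c : Option I, ∀ i,
      x ∈ A i ↔ ((∃ i₀ ∈ c, complIfMem (A i₀) s ⊆ complIfMem (A i) s) ↔ s ∉ A i) := by
  obtain ⟨c, hc⟩ := exists_option_mem_iff_subset (A := fun i => complIfMem (A i) s) (x := x)
    fun i j hi hj => h.union_image_compl.subset_or_subset
      (complIfMem_mem_union_image_compl (hA i) s) (complIfMem_mem_union_image_compl (hA j) s)
      (s := s) ⟨hi, hj⟩ (by simp [notMem_complIfMem_self])
  refine ⟨c, fun i => ?_⟩
  rw [← hc i, mem_complIfMem]
  tauto

end IndepDim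

namespace FirstOrder.Language.Formula

variable {L : Language} {M : Type*} [L.Structure M] {W W' : Type*}

def definedSet (φ : L.Formula (Unit ⊕ W)) (v : W → M) : Set M :=
  {x | φ.Realize (Sum.elim (fun _ => x) v)}

lemma definedSet_relabel (φ : L.Formula (Unit ⊕ W)) (g : W → W') (v : W' → M) :
    definedSet (φ.relabel (Sum.map id g)) v = definedSet φ (v ∘ g) := by
  ext x
  simp [definedSet, Sum.elim_comp_map]

def evalAt (φ : L.Formula (Unit ⊕ W)) (w : W) : L.Formula W :=
  φ.relabel (Sum.elim (fun _ => w) id)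

@[simp]
lemma realize_evalAt {φ : L.Formula (Unit ⊕ W)} {w : W} {v : W → M} :
    (φ.evalAt w).Realize v ↔ v w ∈ definedSet φ v := by
  simp only [evalAt, realize_relabel, Sum.comp_elim, Function.comp_id]
  rfl

def complIfMemAt (φ : L.Formula (Unit ⊕ W)) (w : W) : L.Formula (Unit ⊕ W) :=
  φ.iff ((φ.evalAt w).relabel Sum.inr).not

@[simp]
lemma definedSet_complIfMemAt (φ : L.Formula (Unit ⊕ W)) (w : W) (v : W → M) :
    definedSet (φ.complIfMemAt w) v = complIfMem (definedSet φ v) (v w) := by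
  ext x
  simp [complIfMemAt, definedSet, mem_complIfMem, Function.comp_def]

noncomputable def subsetFormula (φ ψ : L.Formula (Unit ⊕ W)) : L.Formula W :=
  ((φ.imp ψ).relabel Sum.swap).iAlls Unit

@[simp]
lemma realize_subsetFormula {φ ψ : L.Formula (Unit ⊕ W)} {v : W → M} :
    (subsetFormula φ ψ).Realize v ↔ definedSet φ v ⊆ definedSet ψ v := by
  have hswap (i : Unit → M) :
      (fun a => Sum.elim v i a) ∘ Sum.swap = Sum.elim (fun _ => i ()) v := by
    ext (_ | _) <;> rfl
  simp only [subsetFormula, realize_iAlls, realize_relabel, realize_imp, hswap]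
  exact ⟨fun h x => h fun _ => x, fun h i => @h (i ())⟩

end FirstOrder.Language.Formula

theorem BoolCombOf.exists_determining_atoms {L : Language}
    {Ψ : Set ((k : ℕ) × L.Formula (Unit ⊕ Fin k))} {m : ℕ} {θ : L.Formula (Unit ⊕ Fin m)}
    (h : BoolCombOf Ψ m θ) :
    ∃ (N : ℕ) (α : Fin N → L.Formula (Unit ⊕ Fin m)),
      (∀ j, ∃ p ∈ Ψ, ∃ ρ : Fin p.1 → Fin m, α j = p.2.relabel (Sum.map id ρ)) ∧
      ∀ {M : Type*} [L.Structure M] (w w' : Unit ⊕ Fin m → M),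
        (∀ j, (α j).Realize w ↔ (α j).Realize w') → (θ.Realize w ↔ θ.Realize w') := by
  induction h with
  | of p hp ρ => exact ⟨1, fun _ => p.2.relabel (Sum.map id ρ), fun _ => ⟨p, hp, ρ, rfl⟩,
      fun w w' h => h 0⟩
  | not _ ih =>
    obtain ⟨N, α, hα, hdet⟩ := ih
    exact ⟨N, α, hα, fun w w' h => by simp only [Formula.realize_not, hdet w w' h]⟩
  | and _ _ ih₁ ih₂ | or _ _ ih₁ ih₂ =>
    obtain ⟨N₁, α₁, hα₁, hdet₁⟩ := ih₁
    obtain ⟨N₂, α₂, hα₂, hdet₂⟩ := ih₂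
    refine ⟨N₁ + N₂, Fin.append α₁ α₂, ?_, fun w w' h => ?_⟩
    · simpa only [Fin.forall_fin_add, Fin.append_left, Fin.append_right] using ⟨hα₁, hα₂⟩
    · simp only [Fin.forall_fin_add, Fin.append_left, Fin.append_right] at h
      simp only [Formula.realize_inf, Formula.realize_sup, hdet₁ w w' h.1, hdet₂ w w' h.2]

open Formula in
theorem FullyVCMinimal.exists_determining_family {L : Language} {T : L.Theory}
    (hvc : FullyVCMinimal.{w} L T) {γ : Type*} [Finite γ] {ι : Type} [Finite ι]
    (φ : ι → L.Formula (Unit ⊕ γ)) :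
    ∃ (J : Type) (_ : Finite J) (Δ : J → L.Formula (Unit ⊕ γ)),
      (∀ (M : Type w) [Nonempty M] [L.Structure M], M ⊨ T →
        IndepDimLEOne {S : Set M | ∃ j v, S = (Δ j).definedSet v}) ∧
      ∀ (M : Type w) [Nonempty M] [L.Structure M], M ⊨ T → ∀ i (w w' : Unit ⊕ γ → M),
        (∀ j, (Δ j).Realize w ↔ (Δ j).Realize w') → ((φ i).Realize w ↔ (φ i).Realize w') := by
  obtain ⟨Ψ, hΨ, hbasis⟩ := hvc
  obtain ⟨m, ⟨e⟩⟩ := Finite.exists_equiv_fin γ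
  have hatoms (i : ι) : ∃ (N : ℕ) (α : Fin N → L.Formula (Unit ⊕ Fin m)),
      (∀ j, ∃ p ∈ Ψ, ∃ ρ : Fin p.1 → Fin m, α j = p.2.relabel (Sum.map id ρ)) ∧
      ∀ (M : Type w) [Nonempty M] [L.Structure M], M ⊨ T → ∀ w w' : Unit ⊕ Fin m → M,
        (∀ j, (α j).Realize w ↔ (α j).Realize w') →
          (((φ i).relabel (Sum.map id e)).Realize w ↔
            ((φ i).relabel (Sum.map id e)).Realize w') := by
    obtain ⟨θ, hθ, hequiv⟩ := hbasis m ((φ i).relabel (Sum.map id e))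
    obtain ⟨N, α, hα, hdet⟩ := hθ.exists_determining_atoms
    exact ⟨N, α, hα, fun M _ _ hM w w' h =>
      (hequiv M hM w).trans ((hdet w w' h).trans (hequiv M hM w').symm)⟩
  choose N α hα hdet using hatoms
  refine ⟨Σ i, Fin (N i), inferInstance, fun j => (α j.1 j.2).relabel (Sum.map id e.symm),
    fun M _ _ hM => IndepDimLEOne.mono (hΨ M hM) ?_, ?_⟩
  · rintro _ ⟨⟨i, j⟩, v, rfl⟩
    obtain ⟨p, hp, ρ, hαj⟩ := hα i j
    refine ⟨p, hp, v ∘ e.symm ∘ ρ, ?_⟩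
    simp only [hαj, definedSet_relabel]
    rfl
  · intro M _ _ hM i w w' h
    have hφ (w : Unit ⊕ γ → M) :
        ((φ i).relabel (Sum.map id e)).Realize (w ∘ Sum.map id e.symm) ↔ (φ i).Realize w := by
      simp [Function.comp_assoc, Sum.map_comp_map]
    rw [← hφ w, ← hφ w']
    exact hdet i M hM _ _ fun j => by simpa only [realize_relabel] using h ⟨i, j⟩

namespace FirstOrder.Language

open Formula

variable {L : Language} {M : Type*} [L.Structure M]

def pattern {ι α β κ : Type*} (δ : ι → L.Formula (α ⊕ β)) (b : κ → β → M) (a : α → M) :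
    ι × κ → Prop :=
  fun ik => (δ ik.1).Realize (Sum.elim a (b ik.2))

def patterns {ι α β κ : Type*} (δ : ι → L.Formula (α ⊕ β)) (b : κ → β → M) :
    Set (ι × κ → Prop) :=
  range (pattern δ b)

lemma ncard_patterns_fin_zero_le_one {ι β κ : Type*} (δ : ι → L.Formula (Fin 0 ⊕ β))
    (b : κ → β → M) : (patterns δ b).ncard ≤ 1 :=
  have h : (patterns δ b).Subsingleton := subsingleton_range _
  (ncard_le_one h.finite).2 fun _ hx _ hy => h hx hy

lemma ncard_patterns_le_of_determined {ι J α β κ : Type*} [Finite J] [Finite κ]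
    {δ : ι → L.Formula (α ⊕ β)} {Δ : J → L.Formula (α ⊕ β)} (b : κ → β → M)
    (hdet : ∀ i (c : β → M) (a a' : α → M),
      (∀ j, (Δ j).Realize (Sum.elim a c) ↔ (Δ j).Realize (Sum.elim a' c)) →
        ((δ i).Realize (Sum.elim a c) ↔ (δ i).Realize (Sum.elim a' c))) :
    (patterns δ b).ncard ≤ (patterns Δ b).ncard := by
  refine Function.FactorsThrough.ncard_range_le (fun a a' h => ?_) (toFinite _)
  funext ik
  exact propext (hdet ik.1 (b ik.2) a a' fun j => Eq.to_iff (congrFun h (j, ik.2)))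

section Head

variable {n : ℕ} {β : Type*}

def splitHead : Fin (n + 1) ⊕ β → Unit ⊕ (Fin n ⊕ β) :=
  Sum.elim (Fin.cons (Sum.inl ()) (Sum.inr ∘ Sum.inl)) (Sum.inr ∘ Sum.inr)

def joinHead : Unit ⊕ (Fin n ⊕ β) → Fin (n + 1) ⊕ β :=
  Sum.elim (fun _ => Sum.inl 0) (Sum.map Fin.succ id)

@[simp]
lemma realize_relabel_splitHead (φ : L.Formula (Fin (n + 1) ⊕ β)) (x : M) (a : Fin n → M)
    (c : β → M) :
    (φ.relabel splitHead).Realize (Sum.elim (fun _ => x) (Sum.elim a c)) ↔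
      φ.Realize (Sum.elim (Fin.cons x a) c) := by
  rw [realize_relabel]
  congr! 1
  ext (i | _)
  · induction i using Fin.cases <;> rfl
  · rfl

@[simp]
lemma realize_relabel_joinHead (φ : L.Formula (Unit ⊕ (Fin n ⊕ β))) (a : Fin (n + 1) → M)
    (c : β → M) :
    (φ.relabel joinHead).Realize (Sum.elim a c) ↔
      φ.Realize (Sum.elim (fun _ => a 0) (Sum.elim (Fin.tail a) c)) := by
  rw [realize_relabel]
  congr! 1
  ext (_ | _ | _) <;> rfl

end Head

section Code

variable {α β J κ : Type*}

noncomputable def codeFormula (Δ : J → L.Formula (Unit ⊕ (α ⊕ β))) :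
    (J × J) ⊕ J → L.Formula (α ⊕ (β ⊕ β ⊕ Unit))
  | .inl (j₀, j) => subsetFormula
      (((Δ j₀).relabel (Sum.map id (Sum.map id (Sum.inr ∘ Sum.inl)))).complIfMemAt
        (.inr (.inr (.inr ()))))
      (((Δ j).relabel (Sum.map id (Sum.map id Sum.inl))).complIfMemAt (.inr (.inr (.inr ()))))
  | .inr j => ((Δ j).relabel (Sum.map id (Sum.map id Sum.inl))).evalAt (.inr (.inr (.inr ())))

variable {Δ : J → L.Formula (Unit ⊕ (α ⊕ β))} (a : α → M) (c c₀ : β → M) (s : M)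

@[simp]
lemma realize_codeFormula_inl (j₀ j : J) :
    (codeFormula Δ (.inl (j₀, j))).Realize (Sum.elim a (Sum.elim c (Sum.elim c₀ fun _ => s))) ↔
      complIfMem ((Δ j₀).definedSet (Sum.elim a c₀)) s ⊆
        complIfMem ((Δ j).definedSet (Sum.elim a c)) s := by
  simp [codeFormula, definedSet_relabel, Sum.elim_comp_map, ← Function.comp_assoc]

@[simp]
lemma realize_codeFormula_inr (j : J) :
    (codeFormula Δ (.inr j)).Realize (Sum.elim a (Sum.elim c (Sum.elim c₀ fun _ => s))) ↔
      s ∈ (Δ j).definedSet (Sum.elim a c) := by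
  simp [codeFormula, definedSet_relabel, Sum.elim_comp_map]

def codeParams (b : κ → β → M) (s : M) (k₀ : κ) (c : Option (J × κ)) (k : κ) :
    β ⊕ β ⊕ Unit → M :=
  Sum.elim (b k) (Sum.elim (b (c.elim k₀ Prod.snd)) fun _ => s)

def decodeCode (c : Option (J × κ)) (t : ((J × J) ⊕ J) × κ → Prop) (j : J) (k : κ) : Prop :=
  (∃ i₀ ∈ c, t (.inl (i₀.1, j), k)) ↔ ¬t (.inr j, k)

lemma exists_code_mem_definedSet_iff [Finite J] [Finite κ]
    (hID : IndepDimLEOne {S : Set M | ∃ j v, S = (Δ j).definedSet v}) (b : κ → β → M)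
    (k₀ : κ) (x : M) :
    ∃ c : Option (J × κ), ∀ j k, x ∈ (Δ j).definedSet (Sum.elim a (b k)) ↔
      decodeCode c (pattern (codeFormula Δ) (codeParams b s k₀ c) a) j k := by
  obtain ⟨c, hc⟩ := hID.exists_option_mem_iff
    (A := fun jk : J × κ => (Δ jk.1).definedSet (Sum.elim a (b jk.2)))
    (fun jk => ⟨jk.1, _, rfl⟩) s x
  refine ⟨c, fun j k => ?_⟩
  rw [hc (j, k)]
  rcases c with _ | i₀ <;> simp [decodeCode, pattern, codeParams]

end Code

lemma ncard_patterns_le_sum_code {n : ℕ} {β J κ : Type*} [Fintype J] [Fintype κ]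
    {Δ : J → L.Formula (Unit ⊕ (Fin n ⊕ β))}
    (hID : IndepDimLEOne {S : Set M | ∃ j v, S = (Δ j).definedSet v}) (b : κ → β → M) (s : M)
    (k₀ : κ) :
    (patterns (fun j => (Δ j).relabel joinHead) b).ncard ≤
      ∑ c : Option (J × κ), (patterns (codeFormula Δ) (codeParams b s k₀ c)).ncard := by
  choose code hcode using fun (a : Fin n → M) (x : M) =>
    exists_code_mem_definedSet_iff a s hID b k₀ x
  let F (a : Fin (n + 1) → M) : Option (J × κ) × (((J × J) ⊕ J) × κ → Prop) :=
    (code (Fin.tail a) (a 0),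
      pattern (codeFormula Δ) (codeParams b s k₀ (code (Fin.tail a) (a 0))) (Fin.tail a))
  have hdecode (a : Fin (n + 1) → M) :
      pattern (fun j => (Δ j).relabel joinHead) b a =
        fun jk => decodeCode (F a).1 (F a).2 jk.1 jk.2 := by
    funext ⟨j, k⟩
    exact propext ((realize_relabel_joinHead _ _ _).trans (hcode _ _ j k))
  calc _ ≤ (range F).ncard :=
        Function.FactorsThrough.ncard_range_le (fun a a' h => by rw [hdecode, hdecode, h])
          (toFinite _)
    _ ≤ {p | p.2 ∈ patterns (codeFormula Δ) (codeParams b s k₀ p.1)}.ncard :=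
        ncard_le_ncard (by rintro _ ⟨a, rfl⟩; exact ⟨Fin.tail a, rfl⟩) (toFinite _)
    _ ≤ _ := ncard_setOf_snd_mem_le_sum fun c => patterns (codeFormula Δ) (codeParams b s k₀ c)

end FirstOrder.Language

theorem FullyVCMinimal.exists_ncard_patterns_le {L : Language} {T : L.Theory}
    (hvc : FullyVCMinimal.{w} L T) (n : ℕ) {β : Type} [Finite β] {ι : Type} [Finite ι]
    (δ : ι → L.Formula (Fin n ⊕ β)) :
    ∃ K : ℕ, ∀ (M : Type w) [Nonempty M] [L.Structure M], M ⊨ T →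
      ∀ {κ : Type w} [Fintype κ] [Nonempty κ] (b : κ → β → M),
        (patterns δ b).ncard ≤ K * Fintype.card κ ^ n := by
  induction n generalizing β ι with
  | zero => exact ⟨1, fun M _ _ _ κ _ _ b => by simpa using ncard_patterns_fin_zero_le_one δ b⟩
  | succ n ih =>
    obtain ⟨J, _, Δ, hID, hdet⟩ := hvc.exists_determining_family fun i => (δ i).relabel splitHead
    have := Fintype.ofFinite J
    obtain ⟨K, hK⟩ := ih (codeFormula Δ)
    refine ⟨(Fintype.card J + 1) * K, fun M _ _ hM κ _ ⟨k₀⟩ b => ?_⟩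
    calc (patterns δ b).ncard ≤ (patterns (fun j => (Δ j).relabel joinHead) b).ncard := by
          refine ncard_patterns_le_of_determined b fun i c a a' h => ?_
          rw [← Fin.cons_self_tail a, ← Fin.cons_self_tail a', ← realize_relabel_splitHead,
            ← realize_relabel_splitHead]
          exact hdet M hM i _ _ fun j => (realize_relabel_joinHead _ _ _).symm.trans
            ((h j).trans (realize_relabel_joinHead _ _ _))
      _ ≤ ∑ c : Option (J × κ),
            (patterns (codeFormula Δ) (codeParams b (Classical.arbitrary M) k₀ c)).ncard :=
          ncard_patterns_le_sum_code (hID M hM) b _ k₀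
      _ ≤ ∑ c : Option (J × κ), K * Fintype.card κ ^ n :=
          Finset.sum_le_sum fun c _ => hK M hM _
      _ ≤ (Fintype.card J + 1) * K * Fintype.card κ ^ (n + 1) := by
          have hcard : Fintype.card J * Fintype.card κ + 1 ≤
              (Fintype.card J + 1) * Fintype.card κ := by
            nlinarith [Fintype.card_pos (α := κ)]
          simp only [Finset.sum_const, Finset.card_univ, Fintype.card_option, Fintype.card_prod,
            smul_eq_mul]
          exact (Nat.mul_le_mul_right _ hcard).trans_eq (by ring)

theorem stmt_15_general {L : Language} (T : L.Theory) (hvc : FullyVCMinimal.{w} L T) :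
    ∀ (n q : ℕ) (φ : L.Formula (Fin n ⊕ Fin q)), ∃ K : ℕ,
      ∀ (M : Type w) [Nonempty M] [L.Structure M], M ⊨ T →
        ∀ B : Finset (Fin q → M), B.Nonempty →
          Set.ncard {f : {b // b ∈ B} → Prop |
              ∃ a : Fin n → M, ∀ b : {b // b ∈ B}, f b ↔ φ.Realize (Sum.elim a b.1)}
            ≤ K * B.card ^ n := by
  intro n q φ
  obtain ⟨K, hK⟩ := hvc.exists_ncard_patterns_le n fun _ : Unit => φ
  refine ⟨K, fun M _ _ hM B hB => ?_⟩
  have := hB.to_subtype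
  have hset : {f : {b // b ∈ B} → Prop |
      ∃ a : Fin n → M, ∀ b : {b // b ∈ B}, f b ↔ φ.Realize (Sum.elim a b.1)} =
        (fun t b => t ((), b)) '' patterns (fun _ : Unit => φ) (Subtype.val : B → Fin q → M) := by
    ext f
    constructor
    · rintro ⟨a, ha⟩
      exact ⟨pattern _ _ a, ⟨a, rfl⟩, funext fun b => propext (ha b).symm⟩
    · rintro ⟨_, ⟨a, rfl⟩, rfl⟩
      exact ⟨a, fun b => Iff.rfl⟩
  rw [hset]
  exact (ncard_image_le (toFinite _)).trans (by simpa using hK M hM (κ := B) Subtype.val)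

theorem stmt_15 {L : Language} (T : L.Theory) (hcomp : T.IsComplete)
    (hsat : T.IsSatisfiable) (hvc : FullyVCMinimal.{w} L T) :
    ∀ (n q : ℕ) (φ : L.Formula (Fin n ⊕ Fin q)), ∃ K : ℕ,
      ∀ (M : Type w) [Nonempty M] [L.Structure M], M ⊨ T →
        ∀ B : Finset (Fin q → M), B.Nonempty →
          Set.ncard {f : {b // b ∈ B} → Prop |
              ∃ a : Fin n → M, ∀ b : {b // b ∈ B}, f b ↔ φ.Realize (Sum.elim a b.1)}
            ≤ K * B.card ^ n :=
  stmt_15_general T hvc
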